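/- arXiv:2105.12625 — 6 statements merged into one kernel-verified Lean document; each statement's English description precedes it below -/
import Mathlib

section
/- Let A₁, A₂, Q₁, Q₂ : [t₀, T) → ℝ be differentiable with Q₁, Q₂ positive and increasing, and suppose there are positive functions P₁, P₂ with Q₁' = c·P₁·W, Q₂' = c·P₂·W for a common positive function W and constant c > 0, and that A₁' = P₁·S and A₂' = P₂·S for a common nonnegative density S (i.e. (1/P₁)·dA₁/dt = (1/P₂)·dA₂/dt, where A_i are the P_i-weighted volumes of a common submanifold). If P₁/Q₁ ≤ P₂/Q₂ pointwise, Θ₂ := A₂/Q₂ is increasing, and Θ₁(t₀) = Θ₂(t₀), then Θ₁ := A₁/Q₁ is also increasing and Θ₁ ≤ Θ₂. -/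
/-!
Statement 6 (Comparison Lemma, part 1, in ODE form): `A₁, A₂` are weighted volumes of a
common submanifold under positive weights `P₁, P₂` (coarea relation
`P₁⁻¹A₁' = P₂⁻¹A₂'` with a common nonnegative density), the tube volumes satisfy
`Qᵢ' = ω·Pᵢ·W` with `W > 0` and `ω > 0`, and `Qᵢ > 0` are increasing.  If the weight
`P₁` is weaker than `P₂` (`P₁/Q₁ ≤ P₂/Q₂`), the density `Θ₂ = A₂/Q₂` is increasing and
`Θ₁(t₀) = Θ₂(t₀)`, then `Θ₁ = A₁/Q₁` is increasing and `Θ₁ ≤ Θ₂`.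
-/

open Set Filter Topology

/-- Derivative of a function monotone on `Ico t₀ T` is nonnegative there. -/
lemma deriv_nonneg_of_monotoneOn {t₀ T : ℝ} {f : ℝ → ℝ} {d : ℝ} {t : ℝ}
    (ht : t ∈ Ico t₀ T) (hf : HasDerivAt f d t)
    (hmono : MonotoneOn f (Ico t₀ T)) : 0 ≤ d := by
  have htendsto := hasDerivAt_iff_tendsto_slope.mp hf
  have h1 : Tendsto (slope f t) (𝓝[>] t) (𝓝 d) :=
    htendsto.mono_left (nhdsWithin_mono _ (fun y hy => ne_of_gt hy))
  refine ge_of_tendsto h1 ?_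
  have hev : ∀ᶠ y in 𝓝[>] t, y < T :=
    eventually_nhdsWithin_of_eventually_nhds (eventually_lt_nhds ht.2)
  filter_upwards [hev, self_mem_nhdsWithin] with y hyT hy
  have hty : t < y := hy
  have hfy : f t ≤ f y :=
    hmono ht ⟨le_trans ht.1 hty.le, hyT⟩ hty.le
  rw [slope_def_field]
  exact div_nonneg (by linarith) (by linarith)

theorem comparison_lemma_weaker_weight
    (t₀ T : ℝ) (hT : t₀ < T)
    (A₁ A₂ Q₁ Q₂ P₁ P₂ a₁ a₂ W : ℝ → ℝ) (ω : ℝ) (hω : 0 < ω)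
    (hP₁ : ∀ t ∈ Ico t₀ T, 0 < P₁ t) (hP₂ : ∀ t ∈ Ico t₀ T, 0 < P₂ t)
    (hW : ∀ t ∈ Ico t₀ T, 0 < W t)
    (hQ₁pos : ∀ t ∈ Ico t₀ T, 0 < Q₁ t) (hQ₂pos : ∀ t ∈ Ico t₀ T, 0 < Q₂ t)
    -- tube volumes: Qᵢ' = ω·Pᵢ·W (in particular Q₁, Q₂ are increasing)
    (hQ₁' : ∀ t ∈ Ico t₀ T, HasDerivAt Q₁ (ω * P₁ t * W t) t)
    (hQ₂' : ∀ t ∈ Ico t₀ T, HasDerivAt Q₂ (ω * P₂ t * W t) t)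
    -- weighted volumes of a common submanifold
    (hA₁' : ∀ t ∈ Ico t₀ T, HasDerivAt A₁ (a₁ t) t)
    (hA₂' : ∀ t ∈ Ico t₀ T, HasDerivAt A₂ (a₂ t) t)
    -- coarea relation: (1/P₁)·A₁' = (1/P₂)·A₂', a common nonnegative density
    (hcoarea : ∀ t ∈ Ico t₀ T, a₁ t / P₁ t = a₂ t / P₂ t)
    (hnn : ∀ t ∈ Ico t₀ T, 0 ≤ a₁ t)
    -- weight (P₁) is weaker than (P₂)
    (hweak : ∀ t ∈ Ico t₀ T, P₁ t / Q₁ t ≤ P₂ t / Q₂ t)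
    -- Θ₂ is increasing
    (hmono : MonotoneOn (fun t => A₂ t / Q₂ t) (Ico t₀ T))
    -- densities agree at t₀
    (heq : A₁ t₀ / Q₁ t₀ = A₂ t₀ / Q₂ t₀) :
    MonotoneOn (fun t => A₁ t / Q₁ t) (Ico t₀ T) ∧
      ∀ t ∈ Ico t₀ T, A₁ t / Q₁ t ≤ A₂ t / Q₂ t := by
  have ht₀ : t₀ ∈ Ico t₀ T := ⟨le_refl _, hT⟩
  -- derivative of Θ₂
  have hΘ₂' : ∀ t ∈ Ico t₀ T, HasDerivAt (fun s => A₂ s / Q₂ s)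
      ((a₂ t * Q₂ t - A₂ t * (ω * P₂ t * W t)) / Q₂ t ^ 2) t := fun t ht =>
    (hA₂' t ht).div (hQ₂' t ht) (ne_of_gt (hQ₂pos t ht))
  -- nonnegativity of the numerator of Θ₂'
  have hN₂ : ∀ t ∈ Ico t₀ T, 0 ≤ a₂ t * Q₂ t - A₂ t * (ω * P₂ t * W t) := by
    intro t ht
    have hd : 0 ≤ (a₂ t * Q₂ t - A₂ t * (ω * P₂ t * W t)) / Q₂ t ^ 2 :=
      deriv_nonneg_of_monotoneOn ht (hΘ₂' t ht) hmono
    have hq : (0:ℝ) < Q₂ t ^ 2 := pow_pos (hQ₂pos t ht) 2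
    calc (0:ℝ) = 0 * Q₂ t ^ 2 := by ring
    _ ≤ ((a₂ t * Q₂ t - A₂ t * (ω * P₂ t * W t)) / Q₂ t ^ 2) * Q₂ t ^ 2 :=
        mul_le_mul_of_nonneg_right hd hq.le
    _ = a₂ t * Q₂ t - A₂ t * (ω * P₂ t * W t) := by field_simp [(hQ₂pos t ht).ne']
  -- a₁ P₂ = a₂ P₁
  have hcoarea' : ∀ t ∈ Ico t₀ T, a₁ t * P₂ t = a₂ t * P₁ t := by
    intro t ht
    have hp₁ := (hP₁ t ht).ne'
    have hp₂ := (hP₂ t ht).ne'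
    have := hcoarea t ht
    field_simp at this
    linarith [this]
  -- cross-multiplied weakness
  have hweak' : ∀ t ∈ Ico t₀ T, P₁ t * Q₂ t ≤ P₂ t * Q₁ t := by
    intro t ht
    have := hweak t ht
    rwa [div_le_div_iff₀ (hQ₁pos t ht) (hQ₂pos t ht)] at this
  -- the auxiliary function F = Θ₂ · Q₁ − A₁
  set F : ℝ → ℝ := fun s => A₂ s / Q₂ s * Q₁ s - A₁ s with hF
  have hF' : ∀ t ∈ Ico t₀ T, HasDerivAt F
      ((a₂ t * Q₂ t - A₂ t * (ω * P₂ t * W t)) / Q₂ t ^ 2 * Q₁ t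
        + A₂ t / Q₂ t * (ω * P₁ t * W t) - a₁ t) t := fun t ht =>
    (((hΘ₂' t ht).mul (hQ₁' t ht)).sub (hA₁' t ht))
  have hF'nonneg : ∀ t ∈ Ico t₀ T,
      0 ≤ (a₂ t * Q₂ t - A₂ t * (ω * P₂ t * W t)) / Q₂ t ^ 2 * Q₁ t
        + A₂ t / Q₂ t * (ω * P₁ t * W t) - a₁ t := by
    intro t ht
    have hq₂ := hQ₂pos t ht
    have hp₂ := hP₂ t ht
    have hkey : ((a₂ t * Q₂ t - A₂ t * (ω * P₂ t * W t)) / Q₂ t ^ 2 * Q₁ t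
        + A₂ t / Q₂ t * (ω * P₁ t * W t) - a₁ t) * (Q₂ t ^ 2 * P₂ t)
        = (a₂ t * Q₂ t - A₂ t * (ω * P₂ t * W t)) * (P₂ t * Q₁ t - P₁ t * Q₂ t) := by
      have hc := hcoarea' t ht
      have ha₁ : a₁ t = a₂ t * P₁ t / P₂ t := by
        rw [eq_div_iff hp₂.ne']; linarith
      rw [ha₁]; field_simp; ring
    have hpos : (0:ℝ) < Q₂ t ^ 2 * P₂ t := by positivity
    have h2 : 0 ≤ ((a₂ t * Q₂ t - A₂ t * (ω * P₂ t * W t)) / Q₂ t ^ 2 * Q₁ t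
        + A₂ t / Q₂ t * (ω * P₁ t * W t) - a₁ t) * (Q₂ t ^ 2 * P₂ t) := by
      rw [hkey]
      exact mul_nonneg (hN₂ t ht) (by linarith [hweak' t ht])
    nlinarith [h2, hpos]
  -- F is monotone on Ico t₀ T
  have hFcont : ContinuousOn F (Ico t₀ T) := by
    intro t ht
    exact ((hF' t ht).continuousAt).continuousWithinAt
  have hFmono : MonotoneOn F (Ico t₀ T) := by
    apply monotoneOn_of_deriv_nonneg (convex_Ico t₀ T) hFcont
    · intro t ht
      rw [interior_Ico] at ht
      exact ((hF' t ⟨ht.1.le, ht.2⟩).differentiableAt).differentiableWithinAt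
    · intro t ht
      rw [interior_Ico] at ht
      have ht' : t ∈ Ico t₀ T := ⟨ht.1.le, ht.2⟩
      rw [(hF' t ht').deriv]
      exact hF'nonneg t ht'
  -- F t₀ = 0
  have hF0 : F t₀ = 0 := by
    have : A₂ t₀ / Q₂ t₀ * Q₁ t₀ = A₁ t₀ := by
      rw [← heq, div_mul_cancel₀ _ (ne_of_gt (hQ₁pos t₀ ht₀))]
    simp [hF, this]
  -- conclusion 2
  have hle : ∀ t ∈ Ico t₀ T, A₁ t / Q₁ t ≤ A₂ t / Q₂ t := by
    intro t ht
    have hFt : 0 ≤ F t := by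
      rw [← hF0]; exact hFmono ht₀ ht ht.1
    have : A₁ t ≤ A₂ t / Q₂ t * Q₁ t := by simp only [hF] at hFt; linarith
    rw [div_le_div_iff₀ (hQ₁pos t ht) (hQ₂pos t ht)]
    have hq₂ := hQ₂pos t ht
    have hq₁ := hQ₁pos t ht
    calc A₁ t * Q₂ t ≤ (A₂ t / Q₂ t * Q₁ t) * Q₂ t :=
      mul_le_mul_of_nonneg_right this hq₂.le
    _ = A₂ t * Q₁ t := by field_simp
  refine ⟨?_, hle⟩
  -- Θ₁ derivative and its nonnegativity
  have hΘ₁' : ∀ t ∈ Ico t₀ T, HasDerivAt (fun s => A₁ s / Q₁ s)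
      ((a₁ t * Q₁ t - A₁ t * (ω * P₁ t * W t)) / Q₁ t ^ 2) t := fun t ht =>
    (hA₁' t ht).div (hQ₁' t ht) (ne_of_gt (hQ₁pos t ht))
  have hN₁ : ∀ t ∈ Ico t₀ T, 0 ≤ a₁ t * Q₁ t - A₁ t * (ω * P₁ t * W t) := by
    intro t ht
    have hq₁ := hQ₁pos t ht
    have hq₂ := hQ₂pos t ht
    have hp₁ := hP₁ t ht
    have hp₂ := hP₂ t ht
    have hw := hW t ht
    have hc := hcoarea' t ht
    have hn₂ := hN₂ t ht
    have hA : A₁ t * Q₂ t ≤ A₂ t * Q₁ t := by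
      have := hle t ht
      rwa [div_le_div_iff₀ hq₁ hq₂] at this
    -- N₁ * (P₂ Q₂) ≥ P₁ Q₁ N₂ ≥ 0
    have h1 : (a₁ t * Q₁ t - A₁ t * (ω * P₁ t * W t)) * (P₂ t * Q₂ t)
        = P₁ t * Q₁ t * (a₂ t * Q₂ t - A₂ t * (ω * P₂ t * W t))
          + ω * W t * P₁ t * P₂ t * (A₂ t * Q₁ t - A₁ t * Q₂ t) := by
      linear_combination (Q₁ t * Q₂ t) * hc
    have h2 : 0 ≤ (a₁ t * Q₁ t - A₁ t * (ω * P₁ t * W t)) * (P₂ t * Q₂ t) := by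
      rw [h1]
      have t1 : 0 ≤ P₁ t * Q₁ t * (a₂ t * Q₂ t - A₂ t * (ω * P₂ t * W t)) :=
        mul_nonneg (by positivity) hn₂
      have t2 : 0 ≤ ω * W t * P₁ t * P₂ t * (A₂ t * Q₁ t - A₁ t * Q₂ t) :=
        mul_nonneg (by positivity) (by linarith)
      linarith
    nlinarith [h2, mul_pos hp₂ hq₂]
  have hΘ₁cont : ContinuousOn (fun s => A₁ s / Q₁ s) (Ico t₀ T) := by
    intro t ht
    exact ((hΘ₁' t ht).continuousAt).continuousWithinAt
  apply monotoneOn_of_deriv_nonneg (convex_Ico t₀ T) hΘ₁cont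
  · intro t ht
    rw [interior_Ico] at ht
    exact ((hΘ₁' t ⟨ht.1.le, ht.2⟩).differentiableAt).differentiableWithinAt
  · intro t ht
    rw [interior_Ico] at ht
    have ht' : t ∈ Ico t₀ T := ⟨ht.1.le, ht.2⟩
    rw [(hΘ₁' t ht').deriv]
    have hq : (0:ℝ) < Q₁ t ^ 2 := pow_pos (hQ₁pos t ht') 2
    exact div_nonneg (hN₁ t ht') hq.le
end

section
/- Fix k ≥ 1, δ ∈ {-1, 0, 1}, and a > 0 (with a ≥ 1 if δ = -1). Define Q_δ(a,t) = ∫_a^t (s² + δ)^{k/2 - 1} ds + (a² + δ)^{k/2}/(k·a). Then for fixed t ≥ a, the function a ↦ Q_δ(a,t) is nonincreasing in a on its domain; equivalently ∂Q_δ/∂a ≤ 0. -/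
/-!
Statement 8: `Q_δ(a,t) = ∫_a^t (s²+δ)^{k/2-1} ds + (a²+δ)^{k/2}/(k·a)` is nonincreasing
in `a` on its domain (`a > 0`, with `a ≥ 1` when `δ = -1`), for fixed `t ≥ a`.
-/

noncomputable def Qdelta (k : ℕ) (δ a t : ℝ) : ℝ :=
  (∫ s in a..t, (s ^ 2 + δ) ^ ((k : ℝ) / 2 - 1)) + (a ^ 2 + δ) ^ ((k : ℝ) / 2) / (k * a)

open MeasureTheory intervalIntegral Set

lemma Qdelta_aux_integrable (k : ℕ) (hk : 1 ≤ k) (δ : ℝ) (hδ : δ = -1 ∨ δ = 0 ∨ δ = 1)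
    (b c : ℝ) (hb : 0 < b) (hbc : b ≤ c) (hδb : δ = -1 → 1 ≤ b) :
    IntervalIntegrable (fun s : ℝ => (s ^ 2 + δ) ^ ((k : ℝ) / 2 - 1)) volume b c := by
  by_cases hcase : δ = -1 ∧ k = 1
  · obtain ⟨h1, h2⟩ := hcase
    subst h1 h2
    have hb1 : (1:ℝ) ≤ b := hδb rfl
    have hg : IntervalIntegrable (fun s : ℝ => (s - 1) ^ (-(1:ℝ)/2)) volume b c := by
      have := (intervalIntegrable_rpow' (a := b - 1) (b := c - 1)
        (r := -(1:ℝ)/2) (by norm_num)).comp_sub_right 1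
      simpa using this
    apply hg.mono_fun
    · apply ContinuousOn.aestronglyMeasurable _ measurableSet_uIoc
      intro s hs
      rw [uIoc_of_le hbc] at hs
      have hs1 : 1 < s := lt_of_le_of_lt hb1 hs.1
      have : (0:ℝ) < s ^ 2 + (-1) := by nlinarith
      exact (ContinuousAt.rpow_const (((continuous_pow 2).add continuous_const).continuousAt)
        (Or.inl (ne_of_gt this))).continuousWithinAt
    · rw [uIoc_of_le hbc]
      refine (ae_restrict_iff' measurableSet_Ioc).2 (Filter.Eventually.of_forall fun s hs => ?_)
      have hs1 : 1 < s := lt_of_le_of_lt hb1 hs.1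
      have h1 : (0:ℝ) < s - 1 := by linarith
      have h2 : s - 1 ≤ s ^ 2 + (-1) := by nlinarith
      simp only [Real.norm_eq_abs]
      rw [abs_of_nonneg (Real.rpow_nonneg (show (0:ℝ) ≤ s ^ 2 + (-1) by nlinarith) _),
        abs_of_nonneg (Real.rpow_nonneg (show (0:ℝ) ≤ s - 1 by linarith) _)]
      have := Real.rpow_le_rpow_of_nonpos h1 h2 (show ((1:ℕ):ℝ)/2 - 1 ≤ 0 by norm_num)
      calc (s ^ 2 + (-1)) ^ (((1:ℕ):ℝ)/2 - 1) ≤ (s - 1) ^ (((1:ℕ):ℝ)/2 - 1) := this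
        _ = (s - 1) ^ (-(1:ℝ)/2) := by norm_num
  · apply ContinuousOn.intervalIntegrable
    intro s hs
    rw [uIcc_of_le hbc] at hs
    apply ContinuousAt.continuousWithinAt
    apply ContinuousAt.rpow_const (by fun_prop)
    rcases hδ with h | h | h
    · right
      have hk1 : k ≠ 1 := fun hh => hcase ⟨h, hh⟩
      have hk2 : 2 ≤ k := by omega
      have : (2:ℝ) ≤ (k:ℝ) := by exact_mod_cast hk2
      linarith
    · left
      have : 0 < s := lt_of_lt_of_le hb hs.1
      subst h; positivity
    · left
      subst h; positivity

theorem Qdelta_antitone_in_a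
    (k : ℕ) (hk : 1 ≤ k) (δ : ℝ) (hδ : δ = -1 ∨ δ = 0 ∨ δ = 1)
    (t a₁ a₂ : ℝ) (ha₂ : 0 < a₂) (ha : a₂ ≤ a₁) (hat : a₁ ≤ t)
    (hδa : δ = -1 → 1 ≤ a₂) :
    Qdelta k δ a₁ t ≤ Qdelta k δ a₂ t := by
  set f : ℝ → ℝ := fun s => (s ^ 2 + δ) ^ ((k : ℝ) / 2 - 1) with hf
  have hta : a₂ ≤ t := le_trans ha hat
  have hk0 : (0:ℝ) < (k:ℝ) := by exact_mod_cast Nat.lt_of_lt_of_le Nat.zero_lt_one hk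
  have hint : IntervalIntegrable f volume a₂ t :=
    Qdelta_aux_integrable k hk δ hδ a₂ t ha₂ hta hδa
  set G : ℝ → ℝ := fun a =>
    (∫ s in a₂..t, f s) - (∫ s in a₂..a, f s) + (a ^ 2 + δ) ^ ((k : ℝ) / 2) / (k * a) with hG
  -- membership helper
  have hmem : ∀ a ∈ Icc a₂ a₁, a ∈ uIcc a₂ t := by
    intro a haI
    rw [uIcc_of_le hta]
    exact ⟨haI.1, le_trans haI.2 hat⟩
  have hQG : ∀ a ∈ Icc a₂ a₁, Qdelta k δ a t = G a := by
    intro a haI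
    have h1 : IntervalIntegrable f volume a₂ a :=
      hint.mono_set (uIcc_subset_uIcc left_mem_uIcc (hmem a haI))
    have h2 : IntervalIntegrable f volume a t :=
      hint.mono_set (uIcc_subset_uIcc (hmem a haI) right_mem_uIcc)
    have hadd := integral_add_adjacent_intervals h1 h2
    simp only [hG, Qdelta, hf]
    linarith [hadd]
  -- positivity of base at points > a₂ (strict) or ≥ a₂
  have hbase : ∀ x : ℝ, a₂ < x → 0 < x ^ 2 + δ := by
    intro x hx
    rcases hδ with h | h | h
    · have := hδa h; subst h; nlinarith
    · subst h; nlinarith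
    · subst h; nlinarith
  have key : ∀ x ∈ interior (Icc a₂ a₁), ∃ D, HasDerivAt G D x ∧ D ≤ 0 := by
    intro x hx
    rw [interior_Icc] at hx
    have hx0 : 0 < x := lt_trans ha₂ hx.1
    have hB : 0 < x ^ 2 + δ := hbase x hx.1
    have hcf : ∀ y ∈ {y : ℝ | 0 < y ^ 2 + δ}, ContinuousAt f y := by
      intro y hy
      exact ContinuousAt.rpow_const (((continuous_pow 2).add continuous_const).continuousAt)
        (Or.inl (ne_of_gt hy))
    have hopen : IsOpen {y : ℝ | 0 < y ^ 2 + δ} :=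
      isOpen_lt continuous_const (by fun_prop)
    have hmeasf : StronglyMeasurableAtFilter f (nhds x) volume :=
      ContinuousAt.stronglyMeasurableAtFilter hopen hcf x hB
    have hintx : IntervalIntegrable f volume a₂ x :=
      hint.mono_set (uIcc_subset_uIcc left_mem_uIcc
        (hmem x ⟨hx.1.le, hx.2.le⟩))
    have hI : HasDerivAt (fun a => ∫ s in a₂..a, f s) (f x) x :=
      integral_hasDerivAt_right hintx hmeasf (hcf x hB)
    have hnum : HasDerivAt (fun a : ℝ => (a ^ 2 + δ) ^ ((k : ℝ) / 2))
        (((2:ℕ) * x ^ (2-1)) * ((k : ℝ) / 2) * (x ^ 2 + δ) ^ ((k : ℝ) / 2 - 1)) x :=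
      HasDerivAt.rpow_const ((hasDerivAt_pow 2 x).add_const δ) (Or.inl (ne_of_gt hB))
    have hden : HasDerivAt (fun a : ℝ => (k : ℝ) * a) (k : ℝ) x := by
      simpa using (hasDerivAt_id x).const_mul (k : ℝ)
    have hkx : (k : ℝ) * x ≠ 0 := by positivity
    have hg : HasDerivAt (fun a : ℝ => (a ^ 2 + δ) ^ ((k : ℝ) / 2) / (k * a))
        ((((2:ℕ) * x ^ (2-1)) * ((k : ℝ) / 2) * (x ^ 2 + δ) ^ ((k : ℝ) / 2 - 1) * ((k:ℝ) * x)
          - (x ^ 2 + δ) ^ ((k : ℝ) / 2) * (k : ℝ)) / ((k:ℝ) * x) ^ 2) x :=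
      hnum.div hden hkx
    refine ⟨_, ((hasDerivAt_const x (∫ s in a₂..t, f s)).sub hI).add hg, ?_⟩
    -- show the derivative is ≤ 0
    have hE : 0 ≤ (x ^ 2 + δ) ^ ((k : ℝ) / 2 - 1) := Real.rpow_nonneg hB.le _
    have hBP : (x ^ 2 + δ) ^ ((k : ℝ) / 2)
        = (x ^ 2 + δ) ^ ((k : ℝ) / 2 - 1) * (x ^ 2 + δ) := by
      rw [← Real.rpow_add_one (ne_of_gt hB) ((k : ℝ) / 2 - 1)]
      norm_num
    have hfx : f x = (x ^ 2 + δ) ^ ((k : ℝ) / 2 - 1) := rfl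
    rw [hfx, hBP]
    set E := (x ^ 2 + δ) ^ ((k : ℝ) / 2 - 1) with hEdef
    have heq : 0 - E + (((2:ℕ) * x ^ (2-1)) * ((k : ℝ) / 2) * E * ((k:ℝ) * x)
          - E * (x ^ 2 + δ) * (k : ℝ)) / ((k:ℝ) * x) ^ 2
        = -(E * (x ^ 2 + δ)) / ((k:ℝ) * x ^ 2) := by
      field_simp
      ring
    rw [heq]
    apply div_nonpos_of_nonpos_of_nonneg
    · simp only [neg_nonpos]
      exact mul_nonneg hE hB.le
    · positivity
  have hanti : AntitoneOn G (Icc a₂ a₁) := by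
    apply antitoneOn_of_deriv_nonpos (convex_Icc _ _)
    · apply ContinuousOn.add
      · apply ContinuousOn.sub continuousOn_const
        have h1 : IntervalIntegrable f volume a₂ a₁ :=
          hint.mono_set (uIcc_subset_uIcc left_mem_uIcc (hmem a₁ ⟨ha, le_refl _⟩))
        have := continuousOn_primitive_interval' h1 left_mem_uIcc
        rwa [uIcc_of_le ha] at this
      · intro a haI
        have ha0 : 0 < a := lt_of_lt_of_le ha₂ haI.1
        have hB0 : 0 ≤ a ^ 2 + δ := by
          rcases hδ with h | h | h
          · have := hδa h; subst h; nlinarith [haI.1]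
          · subst h; positivity
          · subst h; positivity
        apply ContinuousAt.continuousWithinAt
        apply ContinuousAt.div
        · exact ContinuousAt.rpow_const (((continuous_pow 2).add continuous_const).continuousAt)
            (Or.inr (by positivity))
        · fun_prop
        · positivity
    · intro x hx
      exact ((key x hx).choose_spec.1.differentiableAt).differentiableWithinAt
    · intro x hx
      have h := (key x hx).choose_spec
      rw [h.1.deriv]
      exact h.2
  calc Qdelta k δ a₁ t = G a₁ := hQG a₁ ⟨ha, le_refl _⟩
    _ ≤ G a₂ := hanti ⟨le_refl _, ha⟩ ⟨ha, le_refl _⟩ ha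
    _ = Qdelta k δ a₂ t := (hQG a₂ ⟨le_refl _, ha⟩).symm
end

section
/- Fix k ≥ 2 and h₀ ≥ 1. Let Q₁(t) = ω·(t² - 1)^{k/2}/k (natural weight tube volume for a time coordinate on ℍⁿ) and Q₂(t) = ω·[∫_{h₀}^t (s² - 1)^{k/2 - 1} ds + (h₀² - 1)^{k/2}/(k·h₀)] for t ≥ h₀. Then with P₁(t) = t and P₂(t) = 1, one has P₂(t)/Q₂(t) ≤ P₁(t)/Q₁(t) for all t > h₀; i.e. the natural weight is stronger than the weight (1, h₀⁻¹). -/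
/-!
Statement 9: for a time Minkowskian coordinate on ℍⁿ (with `V(t) = t² - 1`), the natural
weight `P₁(t) = t` with tube volume `Q₁(t) = ω(t²-1)^{k/2}/k` is stronger than the
weight `(1, h₀⁻¹)` with tube volume
`Q₂(t) = ω[∫_{h₀}^t (s²-1)^{k/2-1} ds + (h₀²-1)^{k/2}/(k h₀)]`:
`P₂/Q₂ ≤ P₁/Q₁` for all `t > h₀`.
-/

theorem natural_weight_stronger_hyperbolic
    (k : ℕ) (hk : 2 ≤ k) (h₀ ω : ℝ) (hh₀ : 1 ≤ h₀) (hω : 0 < ω) :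
    ∀ t : ℝ, h₀ < t →
      (1 : ℝ) /
          (ω * ((∫ s in h₀..t, (s ^ 2 - 1) ^ ((k : ℝ) / 2 - 1)) +
            (h₀ ^ 2 - 1) ^ ((k : ℝ) / 2) / (k * h₀)))
        ≤ t / (ω * (t ^ 2 - 1) ^ ((k : ℝ) / 2) / k) := by
  intro t ht
  set p : ℝ := (k : ℝ) / 2 with hpdef
  have hk2 : (2 : ℝ) ≤ (k : ℝ) := by exact_mod_cast hk
  have hkpos : (0 : ℝ) < (k : ℝ) := by linarith
  have hp : (1 : ℝ) ≤ p := by rw [hpdef]; linarith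
  have ht1 : 1 < t := lt_of_le_of_lt hh₀ ht
  have hh0pos : (0 : ℝ) < h₀ := by linarith
  have hkp : (k : ℝ) = 2 * p := by rw [hpdef]; ring
  -- the comparison function and its derivative
  set g : ℝ → ℝ := fun s => (s ^ 2 - 1) ^ p / ((k : ℝ) * s) with hgdef
  set D : ℝ → ℝ := fun s =>
      (p * (s ^ 2 - 1) ^ (p - 1) * (2 * s) * ((k : ℝ) * s) - (s ^ 2 - 1) ^ p * (k : ℝ)) /
        ((k : ℝ) * s) ^ 2 with hDdef
  have hderiv : ∀ s : ℝ, 1 ≤ s → HasDerivAt g (D s) s := by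
    intro s hs
    have hspos : (0 : ℝ) < s := by linarith
    have h1 : HasDerivAt (fun s : ℝ => s ^ 2 - 1) (2 * s) s := by
      simpa using (hasDerivAt_pow 2 s).sub_const 1
    have h2 : HasDerivAt (fun s : ℝ => (s ^ 2 - 1) ^ p)
        (p * (s ^ 2 - 1) ^ (p - 1) * (2 * s)) s :=
      (Real.hasDerivAt_rpow_const (Or.inr hp)).comp s h1
    have h3 : HasDerivAt (fun s : ℝ => (k : ℝ) * s) (k : ℝ) s := by
      simpa using (hasDerivAt_id s).const_mul (k : ℝ)
    have hne : (k : ℝ) * s ≠ 0 := by positivity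
    exact h2.div h3 hne
  -- continuity facts
  have hcontf : ContinuousOn (fun s : ℝ => (s ^ 2 - 1) ^ (p - 1)) (Set.Icc h₀ t) := by
    intro s _
    exact (Real.continuousAt_rpow_const _ _ (Or.inr (by linarith))).comp
      (by fun_prop) |>.continuousWithinAt
  have hcontD : ContinuousOn D (Set.Icc h₀ t) := by
    apply ContinuousOn.div
    · apply ContinuousOn.sub
      · apply ContinuousOn.mul
        · apply ContinuousOn.mul
          · exact hcontf.const_smul p |>.congr (fun s _ => by simp [smul_eq_mul])
          · fun_prop
        · fun_prop
      · apply ContinuousOn.mul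
        · intro s _
          exact (Real.continuousAt_rpow_const _ _ (Or.inr (by linarith))).comp
            (by fun_prop) |>.continuousWithinAt
        · fun_prop
    · fun_prop
    · intro s hs
      have : (0:ℝ) < s := lt_of_lt_of_le hh0pos hs.1
      positivity
  -- pointwise bound D s ≤ (s²-1)^(p-1) on [h₀, t]
  have hDle : ∀ s ∈ Set.Icc h₀ t, D s ≤ (s ^ 2 - 1) ^ (p - 1) := by
    intro s hs
    have hs1 : (1 : ℝ) ≤ s := le_trans hh₀ hs.1
    have hspos : (0 : ℝ) < s := by linarith
    have hu : (0 : ℝ) ≤ s ^ 2 - 1 := by nlinarith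
    rcases eq_or_lt_of_le hu with hu0 | hu0
    · -- s = 1
      have hs1' : s = 1 := by nlinarith
      rcases eq_or_lt_of_le hp with hp1 | hp1
      · subst hs1'
        simp only [hDdef]
        rw [← hp1]
        norm_num
        rw [hkp, ← hp1]
        norm_num
      · subst hs1'
        simp only [hDdef]
        norm_num
        rw [Real.zero_rpow (by linarith : p ≠ 0),
          Real.zero_rpow (by intro h; apply absurd h; intro h'; linarith [sub_eq_zero.mp h'] : p - 1 ≠ 0)]
        norm_num
    · -- s > 1
      have hupos : (0 : ℝ) < s ^ 2 - 1 := hu0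
      have hsplit : (s ^ 2 - 1) ^ p = (s ^ 2 - 1) ^ (p - 1) * (s ^ 2 - 1) := by
        rw [← Real.rpow_add_one (ne_of_gt hupos)]; ring_nf
      have hq : (0 : ℝ) < (s ^ 2 - 1) ^ (p - 1) := Real.rpow_pos_of_pos hupos _
      simp only [hDdef]
      rw [hsplit, div_le_iff₀ (by positivity)]
      rw [hkp]
      nlinarith [mul_pos hq hupos, sq_nonneg s, mul_nonneg hq.le (sq_nonneg (s-1))]
  -- FTC
  have hint : (∫ s in h₀..t, D s) = g t - g h₀ := by
    apply intervalIntegral.integral_eq_sub_of_hasDerivAt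
    · intro s hs
      rw [Set.uIcc_of_le ht.le] at hs
      exact hderiv s (le_trans hh₀ hs.1)
    · exact (hcontD.mono (by rw [Set.uIcc_of_le ht.le])).intervalIntegrable
  -- compare integrals
  have hmono : (∫ s in h₀..t, D s) ≤ ∫ s in h₀..t, (s ^ 2 - 1) ^ (p - 1) := by
    apply intervalIntegral.integral_mono_on ht.le
    · exact (hcontD.mono (by rw [Set.uIcc_of_le ht.le])).intervalIntegrable
    · exact (hcontf.mono (by rw [Set.uIcc_of_le ht.le])).intervalIntegrable
    · exact hDle
  have hkey : g t ≤ (∫ s in h₀..t, (s ^ 2 - 1) ^ (p - 1)) + (h₀ ^ 2 - 1) ^ p / ((k : ℝ) * h₀) := by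
    have : g h₀ = (h₀ ^ 2 - 1) ^ p / ((k : ℝ) * h₀) := rfl
    rw [← this]
    have := hint ▸ hmono
    linarith
  have hgtpos : 0 < g t := by
    have : (0:ℝ) < t ^ 2 - 1 := by nlinarith
    have h2 : (0:ℝ) < (t ^ 2 - 1) ^ p := Real.rpow_pos_of_pos this p
    exact div_pos h2 (by positivity)
  have hApos : 0 < (∫ s in h₀..t, (s ^ 2 - 1) ^ (p - 1)) + (h₀ ^ 2 - 1) ^ p / ((k : ℝ) * h₀) :=
    lt_of_lt_of_le hgtpos hkey
  calc (1 : ℝ) / (ω * ((∫ s in h₀..t, (s ^ 2 - 1) ^ (p - 1)) + (h₀ ^ 2 - 1) ^ p / ((k : ℝ) * h₀)))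
      ≤ 1 / (ω * g t) := by
        apply one_div_le_one_div_of_le (by positivity)
        exact mul_le_mul_of_nonneg_left hkey hω.le
    _ = t / (ω * (t ^ 2 - 1) ^ p / (k : ℝ)) := by
        have hX : (0:ℝ) < (t ^ 2 - 1) ^ p := Real.rpow_pos_of_pos (by nlinarith) p
        rw [hgdef]
        field_simp
end

section
/- Fix k ≥ 2 and h₀ ∈ (0,1). Let V(h) = 2h - h², P₁(h) = 1 - h (natural weight for h = 1 - x on Sⁿ), P₂(h) = 1, Q₁(t) = ω·V(t)^{k/2}/k, and Q₂(t) = ω·[∫_{h₀}^t V(s)^{k/2-1} ds + V(h₀)^{k/2}/(k(1-h₀))] for t ∈ [h₀, 1]. Then P₁(t)/Q₁(t) ≤ P₂(t)/Q₂(t) for all t ∈ (h₀, 1]; i.e. on the sphere the natural weight is weaker than the weight (1, (1-h₀)⁻¹). -/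
lemma key_integral_bound (k : ℕ) (hk : 2 ≤ k) (h₀ t : ℝ)
    (h1 : 0 < h₀) (h2 : h₀ < t) (h3 : t < 1) :
    (∫ s in h₀..t, (2 * s - s ^ 2) ^ ((k : ℝ) / 2 - 1))
      ≤ (2 * t - t ^ 2) ^ ((k : ℝ) / 2) / (k * (1 - t))
        - (2 * h₀ - h₀ ^ 2) ^ ((k : ℝ) / 2) / (k * (1 - h₀)) := by
  have hk0 : (0:ℝ) < k := by positivity
  have hkne : (k:ℝ) ≠ 0 := ne_of_gt hk0
  have hp1 : (1:ℝ) ≤ (k:ℝ)/2 := by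
    have : (2:ℝ) ≤ k := by exact_mod_cast hk
    linarith
  set p : ℝ := (k:ℝ)/2 with hp
  set F : ℝ → ℝ := fun s => (2 * s - s ^ 2) ^ p / (k * (1 - s)) with hF
  set f : ℝ → ℝ := fun s => (2 * s - s ^ 2) ^ (p - 1)
      + (2 * s - s ^ 2) ^ p / (k * (1 - s) ^ 2) with hfdef
  have huIcc : Set.uIcc h₀ t = Set.Icc h₀ t := Set.uIcc_of_le h2.le
  -- basic facts on [h₀, t]
  have hVpos : ∀ s ∈ Set.Icc h₀ t, 0 < 2 * s - s ^ 2 := by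
    intro s hs
    nlinarith [hs.1, hs.2]
  have h1s : ∀ s ∈ Set.Icc h₀ t, (0:ℝ) < 1 - s := by
    intro s hs; linarith [hs.2]
  -- derivative of F
  have hderiv : ∀ s ∈ Set.Icc h₀ t, HasDerivAt F (f s) s := by
    intro s hs
    have hVs := hVpos s hs
    have h1ss := h1s s hs
    have hV : HasDerivAt (fun s : ℝ => 2 * s - s ^ 2) (2 - 2 * s) s := by
      have := ((hasDerivAt_id s).const_mul 2).sub (hasDerivAt_pow 2 s)
      refine this.congr_deriv ?_
      ring
    have hnum : HasDerivAt (fun s : ℝ => (2 * s - s ^ 2) ^ p)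
        ((2 - 2 * s) * p * (2 * s - s ^ 2) ^ (p - 1)) s :=
      hV.rpow_const (Or.inl (ne_of_gt hVs))
    have hden : HasDerivAt (fun s : ℝ => (k:ℝ) * (1 - s)) (-k) s := by
      have := ((hasDerivAt_const s (1:ℝ)).sub (hasDerivAt_id s)).const_mul (k:ℝ)
      refine this.congr_deriv ?_
      simp
    have hdenne : (k:ℝ) * (1 - s) ≠ 0 := by positivity
    have hdiv := hnum.div hden hdenne
    refine hdiv.congr_deriv ?_
    have hVsplit : (2 * s - s ^ 2) ^ p = (2 * s - s ^ 2) ^ (p - 1) * (2 * s - s ^ 2) := by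
      rw [← Real.rpow_add_one (ne_of_gt hVs)]
      ring_nf
    rw [hfdef]
    simp only
    rw [hVsplit, hp]
    have h1ne : (1 - s) ≠ 0 := ne_of_gt h1ss
    field_simp
    ring
  -- integrability
  have hcontV : ContinuousOn (fun s : ℝ => 2 * s - s ^ 2) (Set.Icc h₀ t) := by
    fun_prop
  have hcontf1 : ContinuousOn (fun s : ℝ => (2 * s - s ^ 2) ^ (p - 1)) (Set.Icc h₀ t) :=
    hcontV.rpow_const (fun x hx => Or.inl (ne_of_gt (hVpos x hx)))
  have hcontf : ContinuousOn f (Set.Icc h₀ t) := by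
    apply hcontf1.add
    apply ContinuousOn.div
    · exact hcontV.rpow_const (fun x hx => Or.inl (ne_of_gt (hVpos x hx)))
    · fun_prop
    · intro x hx
      have := h1s x hx
      positivity
  have hintf : IntervalIntegrable f MeasureTheory.volume h₀ t :=
    (huIcc ▸ hcontf).intervalIntegrable
  have hintf1 : IntervalIntegrable (fun s : ℝ => (2 * s - s ^ 2) ^ (p - 1))
      MeasureTheory.volume h₀ t :=
    (huIcc ▸ hcontf1).intervalIntegrable
  have hFTC : (∫ s in h₀..t, f s) = F t - F h₀ :=
    intervalIntegral.integral_eq_sub_of_hasDerivAt (fun s hs => hderiv s (huIcc ▸ hs)) hintf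
  have hmono : (∫ s in h₀..t, (2 * s - s ^ 2) ^ (p - 1)) ≤ ∫ s in h₀..t, f s := by
    apply intervalIntegral.integral_mono_on h2.le hintf1 hintf
    intro s hs
    have hVs := hVpos s hs
    have h1ss := h1s s hs
    have : 0 ≤ (2 * s - s ^ 2) ^ p / (k * (1 - s) ^ 2) := by positivity
    simp only [hfdef]
    linarith
  calc (∫ s in h₀..t, (2 * s - s ^ 2) ^ (p - 1)) ≤ ∫ s in h₀..t, f s := hmono
    _ = F t - F h₀ := hFTC

theorem natural_weight_weaker_spherical
    (k : ℕ) (hk : 2 ≤ k) (h₀ ω : ℝ) (hh₀ : h₀ ∈ Set.Ioo (0 : ℝ) 1) (hω : 0 < ω) :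
    ∀ t ∈ Set.Ioc h₀ 1,
      (1 - t) / (ω * (2 * t - t ^ 2) ^ ((k : ℝ) / 2) / k)
        ≤ (1 : ℝ) /
          (ω * ((∫ s in h₀..t, (2 * s - s ^ 2) ^ ((k : ℝ) / 2 - 1)) +
            (2 * h₀ - h₀ ^ 2) ^ ((k : ℝ) / 2) / (k * (1 - h₀)))) := by
  obtain ⟨hh0, hh1⟩ := hh₀
  intro t ht
  obtain ⟨ht1, ht2⟩ := ht
  have hk0 : (0:ℝ) < k := by positivity
  have hVt : 0 < 2 * t - t ^ 2 := by nlinarith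
  have hVh₀ : 0 < 2 * h₀ - h₀ ^ 2 := by nlinarith
  set p : ℝ := (k:ℝ)/2 with hp
  have hrph : 0 < (2 * h₀ - h₀ ^ 2) ^ p := Real.rpow_pos_of_pos hVh₀ p
  have h1h : (0:ℝ) < 1 - h₀ := by linarith
  have hC : 0 < (2 * h₀ - h₀ ^ 2) ^ p / (k * (1 - h₀)) :=
    div_pos hrph (mul_pos hk0 h1h)
  have hintnn : 0 ≤ ∫ s in h₀..t, (2 * s - s ^ 2) ^ (p - 1) := by
    apply intervalIntegral.integral_nonneg ht1.le
    intro s hs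
    have : 0 ≤ 2 * s - s ^ 2 := by nlinarith [hs.1, hs.2]
    positivity
  set Q : ℝ := (∫ s in h₀..t, (2 * s - s ^ 2) ^ (p - 1))
      + (2 * h₀ - h₀ ^ 2) ^ p / (k * (1 - h₀)) with hQ
  have hQpos : 0 < Q := by rw [hQ]; linarith
  have hrp : 0 < (2 * t - t ^ 2) ^ p := Real.rpow_pos_of_pos hVt p
  have hd1 : 0 < ω * (2 * t - t ^ 2) ^ p / k := by positivity
  have hd2 : 0 < ω * Q := by positivity
  rw [div_le_div_iff₀ hd1 hd2]
  have hmain : (1 - t) * Q ≤ (2 * t - t ^ 2) ^ p / k := by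
    rcases eq_or_lt_of_le ht2 with h | h
    · subst h
      simp only [sub_self, zero_mul]
      positivity
    · have hkey := key_integral_bound k hk h₀ t hh0 ht1 h
      have hQle : Q ≤ (2 * t - t ^ 2) ^ p / (k * (1 - t)) := by
        rw [hQ]; linarith
      have h1t : 0 < 1 - t := by linarith
      calc (1 - t) * Q ≤ (1 - t) * ((2 * t - t ^ 2) ^ p / (k * (1 - t))) := by
            exact mul_le_mul_of_nonneg_left hQle h1t.le
        _ = (2 * t - t ^ 2) ^ p / k := by
            field_simp
  calc (1 - t) * (ω * Q) = ω * ((1 - t) * Q) := by ring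
    _ ≤ ω * ((2 * t - t ^ 2) ^ p / k) := mul_le_mul_of_nonneg_left hmain hω.le
    _ = 1 * (ω * (2 * t - t ^ 2) ^ p / k) := by ring
end

section
/- Let u ≥ v ≥ 0 and a > 0 with u, v ≤ a, and fix k ≥ 1. Define Q_w(t) = ∫_0^t cosh(w r)·(sinh(ar)/a)^{k-1} dr for w ∈ {u, v} and t > 0. Then the weight cosh(vr) is weaker than cosh(ur): cosh(vt)/Q_v(t) ≤ cosh(ut)/Q_u(t) for all t > 0. -/
/-!
Statement 15 (compare-geodesic, hyperbolic case): for `u ≥ v ≥ 0`, `a > 0` with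
`u, v ≤ a`, and tube volumes `Q_w(t) = ∫₀ᵗ cosh(wr)·(sinh(ar)/a)^{k-1} dr`, the weight
`cosh(vr)` is weaker than `cosh(ur)`: `cosh(vt)/Q_v(t) ≤ cosh(ut)/Q_u(t)` for `t > 0`.
-/

private lemma cosh_cross_ineq (u v r t : ℝ) (hv : 0 ≤ v) (hvu : v ≤ u)
    (hr : 0 ≤ r) (hrt : r ≤ t) :
    Real.cosh (v * t) * Real.cosh (u * r) ≤ Real.cosh (u * t) * Real.cosh (v * r) := by
  have hu : 0 ≤ u := hv.trans hvu
  have ht : 0 ≤ t := hr.trans hrt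
  have h1 : Real.cosh (u*r + v*t) + Real.cosh (u*r - v*t)
      = 2 * (Real.cosh (v*t) * Real.cosh (u*r)) := by
    rw [Real.cosh_add, Real.cosh_sub]; ring
  have h2 : Real.cosh (u*t + v*r) + Real.cosh (u*t - v*r)
      = 2 * (Real.cosh (u*t) * Real.cosh (v*r)) := by
    rw [Real.cosh_add, Real.cosh_sub]; ring
  have hD : (0:ℝ) ≤ u*t - v*r := by nlinarith
  have hA : Real.cosh (u*r + v*t) ≤ Real.cosh (u*t + v*r) := by
    rw [Real.cosh_le_cosh, abs_of_nonneg (by positivity), abs_of_nonneg (by positivity)]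
    nlinarith [mul_nonneg (sub_nonneg.2 hvu) (sub_nonneg.2 hrt)]
  have hB : Real.cosh (u*r - v*t) ≤ Real.cosh (u*t - v*r) := by
    rw [Real.cosh_le_cosh, abs_of_nonneg hD, abs_le]
    constructor
    · nlinarith [mul_nonneg (sub_nonneg.2 hvu) (add_nonneg ht hr)]
    · nlinarith [mul_nonneg (add_nonneg hu hv) (sub_nonneg.2 hrt)]
  linarith

theorem cosh_weight_comparison
    (k : ℕ) (hk : 1 ≤ k) (a u v : ℝ) (ha : 0 < a)
    (hv : 0 ≤ v) (hvu : v ≤ u) (hua : u ≤ a) (hva : v ≤ a) :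
    ∀ t : ℝ, 0 < t →
      Real.cosh (v * t) /
          (∫ r in (0 : ℝ)..t, Real.cosh (v * r) * (Real.sinh (a * r) / a) ^ (k - 1))
        ≤ Real.cosh (u * t) /
          (∫ r in (0 : ℝ)..t, Real.cosh (u * r) * (Real.sinh (a * r) / a) ^ (k - 1)) := by
  intro t ht
  have hu : 0 ≤ u := hv.trans hvu
  set g : ℝ → ℝ := fun r => (Real.sinh (a * r) / a) ^ (k - 1) with hg
  have hgc : Continuous g := by
    apply Continuous.pow
    exact (Real.continuous_sinh.comp (continuous_const.mul continuous_id)).div_const a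
  have hint : ∀ w : ℝ, IntervalIntegrable (fun r => Real.cosh (w * r) * g r)
      MeasureTheory.volume 0 t := fun w =>
    ((Real.continuous_cosh.comp (continuous_const.mul continuous_id)).mul hgc).intervalIntegrable 0 t
  have hpos : ∀ w : ℝ, 0 ≤ w →
      0 < ∫ r in (0:ℝ)..t, Real.cosh (w * r) * g r := by
    intro w hw
    apply intervalIntegral.intervalIntegral_pos_of_pos_on (hint w) _ ht
    intro x hx
    have hx0 : 0 < x := hx.1
    have : 0 < Real.sinh (a * x) / a := div_pos (Real.sinh_pos_iff.2 (by positivity)) ha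
    exact mul_pos (Real.cosh_pos _) (pow_pos this _)
  have hQu := hpos u hu
  have hQv := hpos v hv
  rw [div_le_div_iff₀ hQv hQu]
  rw [← intervalIntegral.integral_const_mul, ← intervalIntegral.integral_const_mul]
  apply intervalIntegral.integral_mono_on ht.le ((hint u).const_mul _) ((hint v).const_mul _)
  intro r hr
  have hgr : 0 ≤ g r := by
    have : 0 ≤ Real.sinh (a * r) / a :=
      div_nonneg (Real.sinh_nonneg_iff.2 (mul_nonneg ha.le hr.1)) ha.le
    exact pow_nonneg this _
  have := cosh_cross_ineq u v r t hv hvu hr.1 hr.2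
  calc Real.cosh (v * t) * (Real.cosh (u * r) * g r)
      = (Real.cosh (v * t) * Real.cosh (u * r)) * g r := by ring
    _ ≤ (Real.cosh (u * t) * Real.cosh (v * r)) * g r := mul_le_mul_of_nonneg_right this hgr
    _ = Real.cosh (u * t) * (Real.cosh (v * r) * g r) := by ring
end

section
/- For the family of rotational minimal annuli M_C in ℍ⁴ (C > 0), the renormalised area 𝒜_R(M_C) = 4π ∫_a^∞ [ (ξ²-1)/√((ξ²-1)² - C²) - 1 ] dξ - 4πa, with a = (C+1)^{1/2}, is well-defined (the integral converges) and tends to -∞ as C → +∞. -/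
/-!
Statement 19: for the rotational minimal annuli `M_C` in `ℍ⁴` (`C > 0`), the renormalised
area `𝒜_R(M_C) = 4π ∫_a^∞ [(ξ²-1)/√((ξ²-1)²-C²) - 1] dξ - 4πa`, with `a = √(C+1)`, is
well-defined (the integrand is integrable on `(a, ∞)`) and tends to `-∞` as `C → +∞`.
-/

open Real MeasureTheory Filter Set
open Topology

set_option maxHeartbeats 1000000


lemma sqrt_tendsto_atTop : Tendsto Real.sqrt atTop atTop := by
  apply tendsto_atTop_atTop.2
  intro B
  refine ⟨max (B ^ 2) 0, fun x hx => ?_⟩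
  calc B ≤ |B| := le_abs_self B
  _ = Real.sqrt (B ^ 2) := (Real.sqrt_sq_eq_abs B).symm
  _ ≤ Real.sqrt x := Real.sqrt_le_sqrt (le_trans (le_max_left _ _) hx)

noncomputable def auxG (b x : ℝ) : ℝ :=
  Real.sqrt (x ^ 2 - b) / (2 * b * x ^ 2)
    + (2 * b * Real.sqrt b)⁻¹ * Real.arctan (Real.sqrt (x ^ 2 - b) / Real.sqrt b)

lemma auxG_hasDerivAt {b x : ℝ} (hb : 0 < b) (hx : Real.sqrt b < x) :
    HasDerivAt (auxG b) (1 / (x ^ 3 * Real.sqrt (x ^ 2 - b))) x := by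
  have hb' : (0:ℝ) < Real.sqrt b := Real.sqrt_pos.2 hb
  have hx0 : 0 < x := hb'.trans hx
  have hx2 : b < x ^ 2 := by
    have := Real.sq_sqrt hb.le
    nlinarith [hx, hb'.le]
  have hv : 0 < x ^ 2 - b := by linarith
  set s := Real.sqrt (x ^ 2 - b) with hs
  have hs0 : 0 < s := Real.sqrt_pos.2 hv
  have hs2 : s ^ 2 = x ^ 2 - b := Real.sq_sqrt hv.le
  have h1 : HasDerivAt (fun y : ℝ => y ^ 2 - b) (2 * x) x := by
    simpa using (hasDerivAt_pow 2 x).sub_const b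
  have hsder : HasDerivAt (fun y : ℝ => Real.sqrt (y ^ 2 - b)) (x / s) x := by
    have := (Real.hasDerivAt_sqrt hv.ne').comp x h1
    refine this.congr_deriv ?_
    field_simp
    ring
  have hden : HasDerivAt (fun y : ℝ => 2 * b * y ^ 2) (2 * b * (2 * x)) x := by
    simpa using ((hasDerivAt_pow 2 x).const_mul (2 * b))
  have hfrac : HasDerivAt (fun y : ℝ => Real.sqrt (y ^ 2 - b) / (2 * b * y ^ 2))
      ((x / s * (2 * b * x ^ 2) - s * (2 * b * (2 * x))) / (2 * b * x ^ 2) ^ 2) x :=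
    hsder.div hden (by positivity)
  have hinner : HasDerivAt (fun y : ℝ => Real.sqrt (y ^ 2 - b) / Real.sqrt b)
      (x / s / Real.sqrt b) x := hsder.div_const _
  have harc : HasDerivAt (fun y : ℝ => Real.arctan (Real.sqrt (y ^ 2 - b) / Real.sqrt b))
      (1 / (1 + (s / Real.sqrt b) ^ 2) * (x / s / Real.sqrt b)) x :=
    ((Real.hasDerivAt_arctan (s / Real.sqrt b)).comp x hinner :)
  have := hfrac.add (harc.const_mul (2 * b * Real.sqrt b)⁻¹)
  refine this.congr_deriv ?_
  have hbb : Real.sqrt b * Real.sqrt b = b := Real.mul_self_sqrt hb.le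
  have h1s : 1 + (s / Real.sqrt b) ^ 2 = x ^ 2 / b := by
    field_simp
    nlinarith [hs2, hbb]
  rw [h1s]
  have e1 : (x / s * (2 * b * x ^ 2) - s * (2 * b * (2 * x))) / (2 * b * x ^ 2) ^ 2
      = (2 * b - x ^ 2) / (2 * b * s * x ^ 3) := by
    rw [div_eq_div_iff (by positivity) (by positivity)]
    field_simp
    ring_nf
    linear_combination (-2) * hs2
  have e2 : (2 * b * Real.sqrt b)⁻¹ * (1 / (x ^ 2 / b) * (x / s / Real.sqrt b))
      = x ^ 2 / (2 * b * s * x ^ 3) := by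
    rw [eq_div_iff (by positivity)]
    field_simp
    ring_nf
    linear_combination (-1) * hbb
  rw [e1, e2, ← add_div]
  rw [div_eq_div_iff (by positivity) (by positivity)]
  ring

lemma auxG_tendsto {b : ℝ} (hb : 0 < b) :
    Tendsto (auxG b) atTop (𝓝 (0 + (2 * b * Real.sqrt b)⁻¹ * (π / 2))) := by
  have hc1 : Continuous fun x : ℝ => Real.sqrt (x ^ 2 - b) :=
    Real.continuous_sqrt.comp ((continuous_pow 2).sub continuous_const)
  have h1 : Tendsto (fun x : ℝ => Real.sqrt (x ^ 2 - b) / (2 * b * x ^ 2)) atTop (𝓝 0) := by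
    apply squeeze_zero' (g := fun x : ℝ => 1 / (2 * b * x))
    · filter_upwards [eventually_ge_atTop (1:ℝ)] with x hx
      positivity
    · filter_upwards [eventually_ge_atTop (1:ℝ)] with x hx
      have hx0 : (0:ℝ) < x := by linarith
      have hle : Real.sqrt (x ^ 2 - b) ≤ x := by
        calc Real.sqrt (x ^ 2 - b) ≤ Real.sqrt (x ^ 2) := Real.sqrt_le_sqrt (by nlinarith)
        _ = x := by rw [Real.sqrt_sq hx0.le]
      rw [div_le_div_iff₀ (by positivity) (by positivity)]
      nlinarith [mul_le_mul_of_nonneg_right hle (by positivity : (0:ℝ) ≤ 2 * b * x)]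
    · exact tendsto_const_nhds.div_atTop (tendsto_id.const_mul_atTop (by positivity))
  have hinner : Tendsto (fun x : ℝ => Real.sqrt (x ^ 2 - b) / Real.sqrt b) atTop atTop := by
    apply Tendsto.atTop_div_const (Real.sqrt_pos.2 hb)
    apply sqrt_tendsto_atTop.comp
    have := tendsto_atTop_add_const_right atTop (-b) (tendsto_pow_atTop (two_ne_zero))
    simpa [sub_eq_add_neg] using this
  have h2 : Tendsto (fun x : ℝ => Real.arctan (Real.sqrt (x ^ 2 - b) / Real.sqrt b))
      atTop (𝓝 (π / 2)) :=
    (Real.tendsto_arctan_atTop.mono_right nhdsWithin_le_nhds).comp hinner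
  exact h1.add ((h2.const_mul _))

lemma auxG_zero {b : ℝ} (hb : 0 ≤ b) : auxG b (Real.sqrt b) = 0 := by
  simp [auxG, Real.sq_sqrt hb]

lemma aux_integrable {b : ℝ} (hb : 0 < b) :
    IntegrableOn (fun x => 1 / (x ^ 3 * Real.sqrt (x ^ 2 - b))) (Ioi (Real.sqrt b)) := by
  have hc1 : Continuous fun x : ℝ => Real.sqrt (x ^ 2 - b) :=
    Real.continuous_sqrt.comp ((continuous_pow 2).sub continuous_const)
  have hb' : (0:ℝ) < Real.sqrt b := Real.sqrt_pos.2 hb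
  have hcont : ContinuousWithinAt (auxG b) (Ici (Real.sqrt b)) (Real.sqrt b) := by
    apply ContinuousAt.continuousWithinAt
    apply ContinuousAt.add
    · exact hc1.continuousAt.div (by fun_prop) (by simp [Real.sq_sqrt hb.le]; positivity)
    · exact ((Real.continuous_arctan.comp (hc1.div_const _)).continuousAt).const_mul _
  exact integrableOn_Ioi_deriv_of_nonneg hcont (fun x hx => auxG_hasDerivAt hb hx)
    (fun x hx => by
      have hx0 : (0:ℝ) < x := lt_of_le_of_lt (Real.sqrt_nonneg b) hx
      positivity) (auxG_tendsto hb)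

lemma aux_integral {b : ℝ} (hb : 0 < b) :
    ∫ x in Ioi (Real.sqrt b), 1 / (x ^ 3 * Real.sqrt (x ^ 2 - b))
      = (2 * b * Real.sqrt b)⁻¹ * (π / 2) := by
  have hc1 : Continuous fun x : ℝ => Real.sqrt (x ^ 2 - b) :=
    Real.continuous_sqrt.comp ((continuous_pow 2).sub continuous_const)
  have hcont : ContinuousWithinAt (auxG b) (Ici (Real.sqrt b)) (Real.sqrt b) := by
    apply ContinuousAt.continuousWithinAt
    apply ContinuousAt.add
    · exact hc1.continuousAt.div (by fun_prop) (by simp [Real.sq_sqrt hb.le]; positivity)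
    · exact ((Real.continuous_arctan.comp (hc1.div_const _)).continuousAt).const_mul _
  rw [integral_Ioi_of_hasDerivAt_of_nonneg hcont (fun x hx => auxG_hasDerivAt hb hx)
    (fun x hx => by
      have hx0 : (0:ℝ) < x := lt_of_le_of_lt (Real.sqrt_nonneg b) hx
      positivity) (auxG_tendsto hb), auxG_zero hb.le]
  ring_nf


/-- The integrand of the renormalised-area formula for `M_C`. -/
noncomputable def renAreaIntegrand (C ξ : ℝ) : ℝ :=
  (ξ ^ 2 - 1) / Real.sqrt ((ξ ^ 2 - 1) ^ 2 - C ^ 2) - 1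

lemma renArea_key {C x : ℝ} (hC : 0 < C) (hx : Real.sqrt (C + 1) < x) :
    0 ≤ renAreaIntegrand C x ∧ renAreaIntegrand C x ≤
      Real.sqrt C * ((C + 1) * Real.sqrt (C + 1)) * (1 / (x ^ 3 * Real.sqrt (x ^ 2 - (C + 1)))) := by
  set b := C + 1 with hbdef
  have hb : (0:ℝ) < b := by linarith
  have hb1 : (1:ℝ) < b := by linarith
  have hab : (0:ℝ) < Real.sqrt b := Real.sqrt_pos.2 hb
  have hx0 : 0 < x := hab.trans hx
  have hx2 : b < x ^ 2 := by nlinarith [Real.sq_sqrt hb.le, hab.le, hx]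
  set s := Real.sqrt (x ^ 2 - b) with hsdef
  have hs0 : 0 < s := Real.sqrt_pos.2 (by linarith)
  have hs2 : s ^ 2 = x ^ 2 - b := Real.sq_sqrt (by linarith)
  set u := x ^ 2 - 1 with hudef
  have hu0 : 0 < u := by nlinarith
  set W := (x ^ 2 - 1) ^ 2 - C ^ 2 with hWdef
  have hWfact : W = (x ^ 2 - b) * (x ^ 2 + b - 2) := by rw [hWdef, hbdef]; ring
  have hW_lb : (x ^ 2 - b) * (x ^ 2 * C / b) ≤ W := by
    rw [hWfact]
    have h1 : x ^ 2 * C / b ≤ x ^ 2 + b - 2 := by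
      rw [div_le_iff₀ hb]
      nlinarith
    exact mul_le_mul_of_nonneg_left h1 (by nlinarith)
  have hW0 : 0 < W :=
    lt_of_lt_of_le (mul_pos (by nlinarith) (div_pos (mul_pos (by positivity) hC) hb)) hW_lb
  set w := Real.sqrt W with hwdef
  have hw0 : 0 < w := Real.sqrt_pos.2 hW0
  have hw2 : w ^ 2 = W := Real.sq_sqrt hW0.le
  have hwu : w ≤ u := by
    calc w = Real.sqrt W := rfl
    _ ≤ Real.sqrt (u ^ 2) := Real.sqrt_le_sqrt (by nlinarith)
    _ = u := Real.sqrt_sq hu0.le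
  have hf : renAreaIntegrand C x = u / w - 1 := rfl
  have hnonneg : 0 ≤ renAreaIntegrand C x := by
    rw [hf, sub_nonneg]
    exact (one_le_div hw0).2 hwu
  refine ⟨hnonneg, ?_⟩
  have hcc : Real.sqrt C * Real.sqrt C = C := Real.mul_self_sqrt hC.le
  have hbb : Real.sqrt b * Real.sqrt b = b := Real.mul_self_sqrt hb.le
  have hc0 : 0 < Real.sqrt C := Real.sqrt_pos.2 hC
  set A := s * x * Real.sqrt C / Real.sqrt b with hAdef
  set B := x ^ 2 * C / b with hBdef
  have hA : 0 < A := div_pos (mul_pos (mul_pos hs0 hx0) hc0) hab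
  have hB : 0 < B := div_pos (mul_pos (by positivity) hC) hb
  -- lower bound for w
  have hw_lb : A ≤ w := by
    rw [hwdef, Real.le_sqrt hA.le hW0.le]
    calc A ^ 2 = s ^ 2 * x ^ 2 * C / b := by
          rw [hAdef, div_pow, mul_pow, mul_pow, Real.sq_sqrt hC.le, Real.sq_sqrt hb.le]
    _ = (x ^ 2 - b) * (x ^ 2 * C / b) := by rw [hs2]; ring
    _ ≤ W := hW_lb
  -- lower bound for u
  have hu_lb : B ≤ u := by
    rw [hBdef, div_le_iff₀ hb, hudef]
    nlinarith
  have hkey : renAreaIntegrand C x = C ^ 2 / (w * (u + w)) := by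
    rw [hf, div_sub_one hw0.ne',
      div_eq_div_iff hw0.ne' (mul_pos hw0 (by nlinarith : (0:ℝ) < u + w)).ne']
    linear_combination (w * (u + (x ^ 2 - 1))) * hudef - w * hw2 - w * hWdef
  rw [hkey]
  have hstep : C ^ 2 / (w * (u + w)) ≤ C ^ 2 / (A * B) := by
    apply div_le_div_of_nonneg_left (sq_nonneg C) (mul_pos hA hB)
    calc A * B ≤ w * u := mul_le_mul hw_lb hu_lb hB.le hw0.le
    _ ≤ w * (u + w) := by nlinarith
  refine hstep.trans_eq ?_
  rw [div_eq_iff (mul_pos hA hB).ne', hAdef, hBdef]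
  field_simp
  ring_nf
  linear_combination (-1) * hcc

/-- The renormalised area `𝒜_R(M_C)` of the minimal annulus `M_C ⊂ ℍ⁴`. -/
noncomputable def renAreaMC (C : ℝ) : ℝ :=
  4 * π * (∫ ξ in Ioi (Real.sqrt (C + 1)), renAreaIntegrand C ξ)
    - 4 * π * Real.sqrt (C + 1)

lemma renArea_W_pos {C x : ℝ} (hC : 0 < C) (hx : Real.sqrt (C + 1) < x) :
    0 < (x ^ 2 - 1) ^ 2 - C ^ 2 := by
  have hab : (0:ℝ) < Real.sqrt (C + 1) := Real.sqrt_pos.2 (by linarith)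
  have hx0 : 0 < x := hab.trans hx
  have hx2 : C + 1 < x ^ 2 := by
    nlinarith [Real.sq_sqrt (show (0:ℝ) ≤ C + 1 by linarith), hab.le, hx]
  nlinarith [mul_pos (show (0:ℝ) < x ^ 2 - (C + 1) by linarith)
    (show (0:ℝ) < x ^ 2 - 1 + C by nlinarith)]

lemma renArea_integrable {C : ℝ} (hC : 0 < C) :
    IntegrableOn (renAreaIntegrand C) (Ioi (Real.sqrt (C + 1))) := by
  have hb : (0:ℝ) < C + 1 := by linarith
  have hmeas : AEStronglyMeasurable (renAreaIntegrand C)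
      (volume.restrict (Ioi (Real.sqrt (C + 1)))) := by
    apply ContinuousOn.aestronglyMeasurable _ measurableSet_Ioi
    intro x hx
    apply ContinuousAt.continuousWithinAt
    have hcW : ContinuousAt (fun y : ℝ => Real.sqrt ((y ^ 2 - 1) ^ 2 - C ^ 2)) x :=
      (Real.continuous_sqrt.comp (by continuity)).continuousAt
    exact ((by fun_prop : ContinuousAt (fun y : ℝ => y ^ 2 - 1) x).div hcW
      (ne_of_gt (Real.sqrt_pos.2 (renArea_W_pos hC hx)))).sub continuousAt_const
  apply Integrable.mono'
    ((aux_integrable hb).const_mul (Real.sqrt C * ((C + 1) * Real.sqrt (C + 1)))) hmeas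
  rw [ae_restrict_iff' measurableSet_Ioi]
  refine ae_of_all _ fun x hx => ?_
  obtain ⟨h0, h1⟩ := renArea_key hC hx
  rw [Real.norm_eq_abs, abs_of_nonneg h0]
  exact h1

lemma renArea_bound {C : ℝ} (hC : 0 < C) :
    renAreaMC C ≤ (π ^ 2 - 4 * π) * Real.sqrt (C + 1) := by
  have hb : (0:ℝ) < C + 1 := by linarith
  have hab : (0:ℝ) < Real.sqrt (C + 1) := Real.sqrt_pos.2 hb
  have h1 : (∫ ξ in Ioi (Real.sqrt (C + 1)), renAreaIntegrand C ξ)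
      ≤ Real.sqrt C * ((C + 1) * Real.sqrt (C + 1))
        * ((2 * (C + 1) * Real.sqrt (C + 1))⁻¹ * (π / 2)) := by
    calc (∫ ξ in Ioi (Real.sqrt (C + 1)), renAreaIntegrand C ξ)
        ≤ ∫ x in Ioi (Real.sqrt (C + 1)),
            Real.sqrt C * ((C + 1) * Real.sqrt (C + 1))
              * (1 / (x ^ 3 * Real.sqrt (x ^ 2 - (C + 1)))) :=
          setIntegral_mono_on (renArea_integrable hC)
            ((aux_integrable hb).const_mul _) measurableSet_Ioi
            (fun x hx => (renArea_key hC hx).2)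
    _ = Real.sqrt C * ((C + 1) * Real.sqrt (C + 1))
          * ∫ x in Ioi (Real.sqrt (C + 1)), 1 / (x ^ 3 * Real.sqrt (x ^ 2 - (C + 1))) :=
          MeasureTheory.integral_const_mul _ _
    _ = Real.sqrt C * ((C + 1) * Real.sqrt (C + 1))
          * ((2 * (C + 1) * Real.sqrt (C + 1))⁻¹ * (π / 2)) := by rw [aux_integral hb]
  have h2 : Real.sqrt C * ((C + 1) * Real.sqrt (C + 1))
      * ((2 * (C + 1) * Real.sqrt (C + 1))⁻¹ * (π / 2)) = π / 4 * Real.sqrt C := by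
    field_simp
    ring
  have h3 : Real.sqrt C ≤ Real.sqrt (C + 1) := Real.sqrt_le_sqrt (by linarith)
  have h4 : (∫ ξ in Ioi (Real.sqrt (C + 1)), renAreaIntegrand C ξ)
      ≤ π / 4 * Real.sqrt (C + 1) := by
    refine (h1.trans_eq h2).trans ?_
    nlinarith [Real.pi_pos]
  unfold renAreaMC
  nlinarith [mul_le_mul_of_nonneg_left h4 (by positivity : (0:ℝ) ≤ 4 * π), Real.pi_pos]

theorem renormalised_area_MC_welldefined_tendsto_atBot :
    (∀ C : ℝ, 0 < C → IntegrableOn (renAreaIntegrand C) (Ioi (Real.sqrt (C + 1)))) ∧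
    Tendsto renAreaMC atTop atBot := by
  refine ⟨fun C hC => renArea_integrable hC, ?_⟩
  apply tendsto_atBot_mono' atTop
    (by filter_upwards [eventually_gt_atTop (0:ℝ)] with C hC using renArea_bound hC)
  have hneg : π ^ 2 - 4 * π < 0 := by nlinarith [Real.pi_pos, Real.pi_lt_d2]
  refine (tendsto_const_mul_atBot_of_neg hneg).2 ?_
  exact sqrt_tendsto_atTop.comp (tendsto_atTop_add_const_right _ 1 tendsto_id)
end
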